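/- arXiv:2604.08731 — 5 statements merged into one kernel-verified Lean document; each statement's English description precedes it below -/
import Mathlib

section
/- Fix q,k ≥ 2 and identify [q] with ZMod q. For a predicate f : (ZMod q)^k → {0,1}, define its width ω(f) := max_{y ∈ (ZMod q)^k} Pr_{b uniform in ZMod q}[f(y + b·(1,…,1)) = 1], and for a predicate family F define ω(F) := min_{f ∈ F} ω(f). Then for every instance Φ of Max-CSP(F), the basic LP optimum satisfies optLP(Φ) ≥ ω(F). -/
open Finset

noncomputable section

attribute [local instance] Classical.propDecidable

/-- A probability distribution on a finite set, given by its mass function. -/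
def IsDist {S : Type*} [Fintype S] (D : S → ℝ) : Prop :=
  (∀ x, 0 ≤ D x) ∧ ∑ x, D x = 1

/-- The density function of a distribution: probability times cardinality. -/
def densityFn {S : Type*} [Fintype S] (D : S → ℝ) (x : S) : ℝ :=
  (Fintype.card S : ℝ) * D x

/-- `ω = exp(2πi/q)`. -/
def omegaQ (q : ℕ) : ℂ := Complex.exp (2 * Real.pi * Complex.I / q)

/-- Fourier coefficient of `g : (ZMod q)^I → ℂ` at frequency `u`. -/
def fcoef {q : ℕ} [NeZero q] {I : Type*} [Fintype I] [DecidableEq I]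
    (g : (I → ZMod q) → ℂ) (u : I → ZMod q) : ℂ :=
  (∑ x : I → ZMod q, g x * omegaQ q ^ (-((∑ i, u i * x i : ZMod q).val : ℤ))) /
    (Fintype.card (I → ZMod q) : ℂ)

/-- Fourier coefficient of the density of a distribution. -/
def fourierDensity {q : ℕ} [NeZero q] {I : Type*} [Fintype I] [DecidableEq I]
    (D : (I → ZMod q) → ℝ) (u : I → ZMod q) : ℂ :=
  fcoef (fun x => ((densityFn D x : ℝ) : ℂ)) u

/-- Number of nonzero coordinates. -/
def wt {q : ℕ} {I : Type*} [Fintype I] (u : I → ZMod q) : ℕ :=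
  (univ.filter fun i => u i ≠ 0).card

/-- One-wise uniformity: each coordinate marginal is uniform. -/
def OneWise {q : ℕ} [NeZero q] {I : Type*} [Fintype I] [DecidableEq I]
    (Y : (I → ZMod q) → ℝ) : Prop :=
  ∀ (j : I) (b : ZMod q), (∑ y : I → ZMod q, if y j = b then Y y else 0) = 1 / q

/-- Row `j` of a matrix. -/
def mrow {q m k : ℕ} (U : Fin m × Fin k → ZMod q) (j : Fin m) : Fin k → ZMod q :=
  fun ℓ => U (j, ℓ)

/-- A matrix is singleton-free if no row has exactly one nonzero entry. -/
def SingletonFree {q m k : ℕ} (U : Fin m × Fin k → ZMod q) : Prop :=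
  ∀ j : Fin m, (univ.filter fun ℓ => U (j, ℓ) ≠ 0).card ≠ 1

/-- Row weight: number of nonzero rows. -/
def rwt {q m k : ℕ} (U : Fin m × Fin k → ZMod q) : ℕ :=
  (univ.filter fun j : Fin m => mrow U j ≠ 0).card

/-- Product distribution `Y^{⊗m}`: one independent sample of `Y` per row. -/
def prodRows {q m k : ℕ} (Y : (Fin k → ZMod q) → ℝ) (Z : Fin m × Fin k → ZMod q) : ℝ :=
  ∏ j : Fin m, Y (mrow Z j)

/-- `k`-partite hypermatchings: each column has pairwise distinct entries. -/
def PHMset (m k n : ℕ) : Finset (Fin m → Fin k → Fin n) :=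
  univ.filter fun M => ∀ ℓ : Fin k, Function.Injective fun j => M j ℓ

/-- The projection `Π^φ_M`. -/
def projMap {q m k n k' : ℕ} (φ : Fin k → Fin k') (M : Fin m → Fin k → Fin n)
    (X : Fin n × Fin k' → ZMod q) : Fin m × Fin k → ZMod q :=
  fun p => X (M p.1 p.2, φ p.2)

/-- The distribution of `Π^φ_M X − Y` for `X ∼ D` and `Y ∼ Y^{⊗m}` independent. -/
def inputDist {q m k n k' : ℕ} [NeZero q] (D : (Fin n × Fin k' → ZMod q) → ℝ)
    (Y : (Fin k → ZMod q) → ℝ) (φ : Fin k → Fin k') (M : Fin m → Fin k → Fin n) :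
    (Fin m × Fin k → ZMod q) → ℝ :=
  fun Z => ∑ X : Fin n × Fin k' → ZMod q, D X * prodRows Y (projMap φ M X - Z)

/-- Normalized 1-norm (expectation of absolute value). -/
def norm1 {S : Type*} [Fintype S] (g : S → ℂ) : ℝ :=
  (∑ x, ‖g x‖) / (Fintype.card S : ℝ)

/-- Sup-norm. -/
def normInf {S : Type*} [Fintype S] (g : S → ℂ) : ℝ := ⨆ x, ‖g x‖

/-- Square of the normalized 2-norm. -/
def norm2sq {S : Type*} [Fintype S] (g : S → ℂ) : ℝ :=
  (∑ x, ‖g x‖ ^ 2) / (Fintype.card S : ℝ)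

/-- The Fourier bound function `U_{C,s}(h; N)`. -/
def UBound (q : ℕ) (C : ℝ) (s h N : ℕ) : ℝ :=
  if h = 0 then 1
  else if h ≤ s then (C * Real.sqrt ((s : ℝ) * N) / h) ^ ((h : ℝ) / 2)
  else min ((C * Real.sqrt (N : ℝ) / Real.sqrt (h : ℝ)) ^ ((h : ℝ) / 2))
       ((Real.exp 1 * (q : ℝ) ^ 2 * N / h) ^ ((h : ℝ) / 2))

/-- `(C,s)`-boundedness of a distribution. -/
def IsBounded (q : ℕ) [NeZero q] {I : Type*} [Fintype I] [DecidableEq I] (C : ℝ) (s : ℕ)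
    (D : (I → ZMod q) → ℝ) : Prop :=
  ∀ h : ℕ, 1 ≤ h → h ≤ Fintype.card I →
    ∑ u ∈ univ.filter (fun u : I → ZMod q => wt u = h), ‖fourierDensity D u‖
      ≤ UBound q C s h (Fintype.card I)

/-- A constraint: a predicate together with a tuple of variables. -/
abbrev Cstr (q k : ℕ) (V : Type*) := ((Fin k → ZMod q) → Bool) × (Fin k → V)

/-- A valid instance of `Max-CSP(F)`: a nonempty list of constraints whose predicates
lie in `F` and whose variable tuples consist of distinct variables. -/
def ValidInstance {q k : ℕ} {V : Type*} (F : Set ((Fin k → ZMod q) → Bool))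
    (Φ : List (Cstr q k V)) : Prop :=
  Φ ≠ [] ∧ ∀ C ∈ Φ, C.1 ∈ F ∧ Function.Injective C.2

/-- The marginal of a distribution on `(ZMod q)^k` at coordinate `ℓ`. -/
def marg {q k : ℕ} [NeZero q] (D : (Fin k → ZMod q) → ℝ) (ℓ : Fin k) (b : ZMod q) : ℝ :=
  ∑ a : Fin k → ZMod q, if a ℓ = b then D a else 0

/-- A feasible solution of the basic LP: local distributions with consistent marginals. -/
def LPfeasible {q k : ℕ} [NeZero q] {V : Type*} (Φ : List (Cstr q k V))
    (Y : Cstr q k V → (Fin k → ZMod q) → ℝ) : Prop :=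
  (∀ C ∈ Φ, IsDist (Y C)) ∧
  ∀ C ∈ Φ, ∀ C' ∈ Φ, ∀ ℓ ℓ' : Fin k, C.2 ℓ = C'.2 ℓ' →
    ∀ b : ZMod q, marg (Y C) ℓ b = marg (Y C') ℓ' b

/-- The value of a basic-LP solution: the average over constraints of the local expected
satisfaction probability. -/
def LPvalue {q k : ℕ} [NeZero q] {V : Type*} (Φ : List (Cstr q k V))
    (Y : Cstr q k V → (Fin k → ZMod q) → ℝ) : ℝ :=
  ((Φ.map fun C => ∑ a : Fin k → ZMod q, if C.1 a then Y C a else 0).sum) / (Φ.length : ℝ)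

/-- The optimum of the basic LP. -/
def optLP {q k : ℕ} [NeZero q] {V : Type*} (Φ : List (Cstr q k V)) : ℝ :=
  sSup {v | ∃ Y, LPfeasible Φ Y ∧ LPvalue Φ Y = v}

/-- The width of a predicate: the maximum over `y` of the probability over a uniform
`b ∈ ZMod q` that `f(y + b·(1,…,1)) = 1`. -/
def width {q k : ℕ} [NeZero q] (f : (Fin k → ZMod q) → Bool) : ℝ :=
  ⨆ y : Fin k → ZMod q,
    (∑ b : ZMod q, if f (fun i => y i + b) then (1 : ℝ) else 0) / (q : ℝ)

/-- The width of a predicate family: the minimum width of its members. -/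
def widthF {q k : ℕ} [NeZero q] (F : Set ((Fin k → ZMod q) → Bool)) : ℝ :=
  sInf (width '' F)

/-! Give each constraint `(f, e)` the law of `y_f + b·(1,…,1)` with `b` uniform, where `y_f`
attains the width of `f`. Every one-coordinate marginal of such a law is uniform, so these local
distributions are consistent however the constraints share variables, and `(f, e)` is satisfied
with probability exactly `ω(f) ≥ ω(F)`. -/

section ShiftDist

variable {q : ℕ} [NeZero q] {ι : Type*} [Fintype ι] [DecidableEq ι]

def shiftDist (y : ι → ZMod q) (a : ι → ZMod q) : ℝ :=
  (∑ b : ZMod q, if a = (fun i => y i + b) then (1 : ℝ) else 0) / q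

theorem sum_mul_shiftDist (y : ι → ZMod q) (w : (ι → ZMod q) → ℝ) :
    ∑ a, w a * shiftDist y a = (∑ b : ZMod q, w (fun i => y i + b)) / q := by
  simp only [shiftDist, mul_div_assoc', ← Finset.sum_div, Finset.mul_sum, mul_ite, mul_one,
    mul_zero]
  rw [Finset.sum_comm]
  simp only [Finset.sum_ite_eq', Finset.mem_univ, if_true]

theorem sum_ite_shiftDist (y : ι → ZMod q) (p : (ι → ZMod q) → Prop) [DecidablePred p] :
    ∑ a, (if p a then shiftDist y a else 0) =
      (∑ b : ZMod q, if p (fun i => y i + b) then (1 : ℝ) else 0) / q := by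
  rw [← sum_mul_shiftDist y (fun a => if p a then (1 : ℝ) else 0)]
  exact Finset.sum_congr rfl fun a _ => (boole_mul _ _).symm

theorem isDist_shiftDist (y : ι → ZMod q) : IsDist (shiftDist y) := by
  refine ⟨fun a => div_nonneg (Finset.sum_nonneg fun _ _ => by positivity) (Nat.cast_nonneg q),
    ?_⟩
  simpa [ZMod.card] using sum_ite_shiftDist y (fun _ => True)

end ShiftDist

theorem marg_shiftDist {q k : ℕ} [NeZero q] (y : Fin k → ZMod q) (ℓ : Fin k) (b : ZMod q) :
    marg (shiftDist y) ℓ b = 1 / q := by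
  rw [marg, sum_ite_shiftDist y (fun a => a ℓ = b)]
  simp only [← eq_sub_iff_add_eq', Finset.sum_ite_eq', Finset.mem_univ, if_true]

theorem exists_width_eq {q k : ℕ} [NeZero q] (f : (Fin k → ZMod q) → Bool) :
    ∃ y : Fin k → ZMod q,
      (∑ b : ZMod q, if f (fun i => y i + b) then (1 : ℝ) else 0) / q = width f :=
  exists_eq_ciSup_of_finite

theorem width_nonneg {q k : ℕ} [NeZero q] (f : (Fin k → ZMod q) → Bool) : 0 ≤ width f :=
  Real.iSup_nonneg fun _ => div_nonneg (Finset.sum_nonneg fun _ _ => by positivity)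
    (Nat.cast_nonneg q)

theorem widthF_le_width {q k : ℕ} [NeZero q] {F : Set ((Fin k → ZMod q) → Bool)}
    {f : (Fin k → ZMod q) → Bool} (hf : f ∈ F) : widthF F ≤ width f :=
  csInf_le ⟨0, by rintro _ ⟨g, -, rfl⟩; exact width_nonneg g⟩ ⟨f, hf, rfl⟩

section LP

variable {q k : ℕ} [NeZero q] {V : Type*} {Φ : List (Cstr q k V)}
  {Y : Cstr q k V → (Fin k → ZMod q) → ℝ}

theorem LPvalue_le_one (hY : LPfeasible Φ Y) : LPvalue Φ Y ≤ 1 := by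
  refine div_le_one_of_le₀ ?_ (Nat.cast_nonneg _)
  have hle : ∀ x ∈ Φ.map (fun C => ∑ a, if C.1 a then Y C a else 0), x ≤ 1 := by
    simp only [List.mem_map]
    rintro _ ⟨C, hC, rfl⟩
    obtain ⟨hnonneg, hsum⟩ := hY.1 C hC
    calc _ ≤ ∑ a, Y C a := Finset.sum_le_sum fun a _ => by split_ifs <;> simp [hnonneg a]
      _ = 1 := hsum
  simpa using List.sum_le_card_nsmul _ 1 hle

theorem LPvalue_le_optLP (hY : LPfeasible Φ Y) : LPvalue Φ Y ≤ optLP Φ :=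
  le_csSup ⟨1, by rintro _ ⟨Y', hY', rfl⟩; exact LPvalue_le_one hY'⟩ ⟨Y, hY, rfl⟩

theorem le_LPvalue_of_forall_le {c : ℝ} (hΦ : Φ ≠ [])
    (hc : ∀ C ∈ Φ, c ≤ ∑ a, if C.1 a then Y C a else 0) : c ≤ LPvalue Φ Y := by
  rw [LPvalue, le_div_iff₀ (by exact_mod_cast List.length_pos_iff.mpr hΦ)]
  have hle : ∀ x ∈ Φ.map (fun C => ∑ a, if C.1 a then Y C a else 0), c ≤ x := by
    simp only [List.mem_map]
    rintro _ ⟨C, hC, rfl⟩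
    exact hc C hC
  simpa [mul_comm] using List.card_nsmul_le_sum _ c hle

end LP

theorem width_le_optLP_general
    (q k : ℕ) [NeZero q]
    (V : Type*) (F : Set ((Fin k → ZMod q) → Bool))
    (Φ : List (Cstr q k V)) (hΦ : ValidInstance F Φ) :
    widthF F ≤ optLP Φ := by
  obtain ⟨hne, hmem⟩ := hΦ
  choose y hy using fun f : (Fin k → ZMod q) → Bool => exists_width_eq f
  let Y : Cstr q k V → (Fin k → ZMod q) → ℝ := fun C => shiftDist (y C.1)
  have hfeas : LPfeasible Φ Y :=
    ⟨fun C _ => isDist_shiftDist _, fun C _ C' _ ℓ ℓ' _ b => by simp only [Y, marg_shiftDist]⟩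
  calc widthF F ≤ LPvalue Φ Y := le_LPvalue_of_forall_le hne fun C hC => by
        rw [sum_ite_shiftDist, hy]
        exact widthF_le_width (hmem C hC).1
    _ ≤ optLP Φ := LPvalue_le_optLP hfeas

/-- For every instance `Φ` of `Max-CSP(F)`, the basic LP optimum is at
least the width `ω(F)`. -/
theorem width_le_optLP
    (q k : ℕ) [NeZero q] (hq : 2 ≤ q) (hk : 2 ≤ k)
    (V : Type*) [Fintype V] (F : Set ((Fin k → ZMod q) → Bool))
    (Φ : List (Cstr q k V)) (hΦ : ValidInstance F Φ) :
    widthF F ≤ optLP Φ :=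
  width_le_optLP_general q k V F Φ hΦ

end
end

section
/- Let q ≥ 2, let k,m ∈ ℕ, let Y be a one-wise uniform distribution on (ZMod q)^k, and let U ∈ (ZMod q)^{m×k}. If U is not singleton-free, i.e., there exists a row index j ∈ [m] such that the j-th row U_j of U has exactly one nonzero entry, then the Fourier coefficient of the density of the product distribution Y^{⊗m} at U vanishes: μ̂_{Y^{⊗m}}(U) = 0. -/
open Finset

noncomputable section

attribute [local instance] Classical.propDecidable

/-!
The Fourier transform turns the product distribution `Y^{⊗m}` into a product over rows: the
coefficient at `U` is the product of the coefficients of `Y` at the rows of `U`. If a row has a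
single nonzero entry `c` in column `ℓ`, its factor is `E[ω^{-c y_ℓ}]`; since `y_ℓ` is uniform,
this is the average over `ZMod q` of the nontrivial character `b ↦ ω^{-c b}`, which is `0`.
-/

lemma AddChar.map_sum_eq_prod {A M ι : Type*} [AddCommMonoid A] [CommMonoid M]
    (ψ : AddChar A M) (s : Finset ι) (f : ι → A) : ψ (∑ i ∈ s, f i) = ∏ i ∈ s, ψ (f i) := by
  induction s using Finset.cons_induction with
  | empty => simp
  | cons a s _ ih => rw [sum_cons, prod_cons, AddChar.map_add_eq_mul, ih]

lemma omegaQ_zpow_neg_val (q : ℕ) [NeZero q] (a : ZMod q) :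
    omegaQ q ^ (-(a.val : ℤ)) = ZMod.stdAddChar (-a) := by
  have hcast : ((-(a.val : ℤ) : ℤ) : ZMod q) = -a := by simp
  rw [omegaQ, ← Complex.exp_int_mul, ← hcast, ZMod.stdAddChar_coe]
  congr 1
  ring

lemma fourierDensity_eq_sum {q : ℕ} [NeZero q] {I : Type*} [Fintype I] [DecidableEq I]
    (D : (I → ZMod q) → ℝ) (u : I → ZMod q) :
    fourierDensity D u = ∑ x, (D x : ℂ) * ZMod.stdAddChar (-∑ i, u i * x i) := by
  have hcard : (Fintype.card (I → ZMod q) : ℂ) ≠ 0 := Nat.cast_ne_zero.mpr Fintype.card_ne_zero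
  simp only [fourierDensity, fcoef, densityFn, omegaQ_zpow_neg_val, Complex.ofReal_mul,
    Complex.ofReal_natCast, mul_assoc, ← mul_sum]
  field_simp

lemma fourierDensity_prodRows {q m k : ℕ} [NeZero q] (Y : (Fin k → ZMod q) → ℝ)
    (U : Fin m × Fin k → ZMod q) :
    fourierDensity (prodRows Y) U = ∏ j, fourierDensity Y (mrow U j) := by
  simp only [fourierDensity_eq_sum, Fintype.prod_sum]
  rw [← (Equiv.curry (Fin m) (Fin k) (ZMod q)).symm.sum_comp]
  refine sum_congr rfl fun W _ => ?_
  rw [Fintype.sum_prod_type, ← sum_neg_distrib, AddChar.map_sum_eq_prod, prodRows,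
    Complex.ofReal_prod, ← prod_mul_distrib]
  rfl

lemma OneWise.sum_mul_comp_eval {q : ℕ} [NeZero q] {I : Type*} [Fintype I] [DecidableEq I]
    {Y : (I → ZMod q) → ℝ} (hY : OneWise Y) (ℓ : I) (f : ZMod q → ℂ) :
    ∑ y, (Y y : ℂ) * f (y ℓ) = (∑ b, f b) / q := by
  rw [← sum_fiberwise univ (fun y => y ℓ), sum_div]
  refine sum_congr rfl fun b _ => ?_
  have hmarginal : ∑ y with y ℓ = b, (Y y : ℂ) = 1 / q := by
    rw [← Complex.ofReal_sum, sum_filter, hY ℓ b]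
    push_cast
    rfl
  calc ∑ y with y ℓ = b, (Y y : ℂ) * f (y ℓ)
      = (∑ y with y ℓ = b, (Y y : ℂ)) * f b := by
        rw [sum_mul]
        exact sum_congr rfl fun y hy => by rw [(mem_filter.mp hy).2]
    _ = f b / q := by rw [hmarginal, one_div_mul_eq_div]

lemma OneWise.fourierDensity_eq_zero_of_wt_eq_one {q : ℕ} [NeZero q] {I : Type*} [Fintype I]
    [DecidableEq I] {Y : (I → ZMod q) → ℝ} (hY : OneWise Y) {u : I → ZMod q} (hu : wt u = 1) :
    fourierDensity Y u = 0 := by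
  obtain ⟨ℓ, hℓ⟩ := card_eq_one.mp hu
  have hsupport : ∀ i, u i ≠ 0 ↔ i = ℓ := fun i => by
    simpa using congrArg (i ∈ ·) hℓ
  have hpair : ∀ y : I → ZMod q, ∑ i, u i * y i = u ℓ * y ℓ := fun y =>
    Fintype.sum_eq_single ℓ fun i hi => by
      rw [not_ne_iff.mp (mt (hsupport i).mp hi), zero_mul]
  have hcharsum : ∑ b, ZMod.stdAddChar (b * -u ℓ) = 0 := by
    rw [AddChar.sum_mulShift _ (ZMod.isPrimitive_stdAddChar q),
      if_neg (neg_ne_zero.mpr ((hsupport ℓ).mpr rfl)), Nat.cast_zero]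
  simp only [fourierDensity_eq_sum, hpair, ← mul_neg, mul_comm (u ℓ)]
  rw [hY.sum_mul_comp_eval ℓ (fun b => ZMod.stdAddChar (b * -u ℓ)), hcharsum, zero_div]

theorem prod_onewise_fourier_vanish_general
    (q : ℕ) [NeZero q] (k m : ℕ)
    (Y : (Fin k → ZMod q) → ℝ) (hY1 : OneWise Y)
    (U : Fin m × Fin k → ZMod q)
    (hU : ∃ j : Fin m, (univ.filter fun ℓ => U (j, ℓ) ≠ 0).card = 1) :
    fourierDensity (prodRows Y) U = 0 := by
  obtain ⟨j, hj⟩ := hU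
  rw [fourierDensity_prodRows]
  exact prod_eq_zero (mem_univ j) (hY1.fourierDensity_eq_zero_of_wt_eq_one hj)

/-- If `Y` is one-wise uniform on `(ZMod q)^k` and `U ∈ (ZMod q)^{m×k}`
is not singleton-free (some row has exactly one nonzero entry), then the Fourier
coefficient of the density of `Y^{⊗m}` at `U` vanishes. -/
theorem prod_onewise_fourier_vanish
    (q : ℕ) [NeZero q] (hq : 2 ≤ q) (k m : ℕ)
    (Y : (Fin k → ZMod q) → ℝ) (hY : IsDist Y) (hY1 : OneWise Y)
    (U : Fin m × Fin k → ZMod q)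
    (hU : ∃ j : Fin m, (univ.filter fun ℓ => U (j, ℓ) ≠ 0).card = 1) :
    fourierDensity (prodRows Y) U = 0 :=
  prod_onewise_fourier_vanish_general q k m Y hY1 U hU

end
end

section
/- For every k ∈ ℕ there exist C < ∞ and α₀ > 0 such that the following holds. Let n,m ∈ ℕ with m ≤ α₀·n, let U ⊆ [n]×[k] with h := |U| satisfying 2 ≤ h ≤ k·m. Then for a uniformly random M ∈ PHM(m,k,n), Pr[ U ⊆ supp(M) and for every j ∈ [m], |U ∩ supp(M_j)| ≠ 1 ] ≤ (C·h/n)^{h/2}. -/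
open Finset

noncomputable section

attribute [local instance] Classical.propDecidable

/-- The `j`-th hyperedge of a hypermatching `M`, as a subset of `[n]×[k]`. -/
def edgeNK {m k n : ℕ} (M : Fin m → Fin k → Fin n) (j : Fin m) : Finset (Fin n × Fin k) :=
  univ.image fun ℓ => (M j ℓ, ℓ)


/-!
Assign to each `u ∈ U` the index `r u` of the hyperedge containing it. On the event no fibre of
`r` is a singleton, so `r` takes at most `h/2` values, and there are at most
`∑_{t ≤ h/2} C(m,t) t^h ≤ (e m h)^{h/2}` such maps. For a fixed `r`, the hypermatchings placing
each `u` in hyperedge `r u` have `h` prescribed entries, at most `m` in each column, which cuts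
their number by a factor `(n - m + 1)^h`. Since `m ≤ n/2`,
`(e m h)^{h/2} ≤ (6h/n)^{h/2} (n - m + 1)^h`.
-/

open Function Real

section Counting

variable {α β : Type*} [Fintype α]

theorem Nat.descFactorial_sub_mul_pow_le {n m a : ℕ} (ha : a ≤ m) (hmn : m ≤ n) :
    n.descFactorial (m - a) * (n - m + 1) ^ a ≤ n.descFactorial m := by
  rw [← Nat.descFactorial_mul_descFactorial (Nat.sub_le m a), Nat.sub_sub_self ha, mul_comm]
  refine Nat.mul_le_mul_right _ ?_
  calc (n - m + 1) ^ a = (n - (m - a) + 1 - a) ^ a := by congr 1; omega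
    _ ≤ _ := Nat.pow_sub_le_descFactorial _ a

theorem card_filter_forall_column {ι κ γ : Type*} [Fintype ι] [Fintype κ] [Fintype γ]
    [DecidableEq ι] [DecidableEq κ] (P : κ → (ι → γ) → Prop) [∀ ℓ, DecidablePred (P ℓ)]
    [DecidablePred fun M : ι → κ → γ => ∀ ℓ, P ℓ fun j => M j ℓ] :
    #{M : ι → κ → γ | ∀ ℓ, P ℓ fun j => M j ℓ} = ∏ ℓ, #{c : ι → γ | P ℓ c} := by
  rw [← Fintype.card_piFinset]
  refine card_nbij' swap swap ?_ ?_ (fun _ _ => rfl) (fun _ _ => rfl) <;>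
    intro M <;> simp [swap]

theorem card_le_descFactorial_of_injective_of_eqOn [Fintype β] (R : Finset α) (S : Finset (α → β))
    (hinj : ∀ c ∈ S, Injective c) (hR : ∀ c ∈ S, ∀ c' ∈ S, ∀ j ∈ R, c j = c' j) :
    #S ≤ (Fintype.card β).descFactorial (Fintype.card α - #R) := by
  let restrict (c : S) : ↥Rᶜ ↪ β := ⟨fun x => c.1 x, fun _ _ h => Subtype.ext (hinj c c.2 h)⟩
  have : Injective restrict := by
    intro c c' h
    ext j
    by_cases hj : j ∈ R
    · exact hR c c.2 c' c'.2 j hj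
    · exact DFunLike.congr_fun h ⟨j, by simpa using hj⟩
  calc #S = Fintype.card S := (Fintype.card_coe S).symm
    _ ≤ Fintype.card (↥Rᶜ ↪ β) := Fintype.card_le_of_injective restrict this
    _ = _ := by simp [Fintype.card_embedding_eq]

theorem card_filter_card_image_le [DecidableEq α] [Fintype β] [DecidableEq β] (t : ℕ) :
    #{r : α → β | #(univ.image r) ≤ t}
      ≤ ∑ s ∈ range (t + 1), (Fintype.card β).choose s * s ^ Fintype.card α := by
  have hcover : (univ.filter fun r : α → β => #(univ.image r) ≤ t) ⊆
      (range (t + 1)).biUnion fun s =>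
        (powersetCard s univ).biUnion fun T => Fintype.piFinset fun _ => T := by
    intro r hr
    simp only [mem_filter, mem_univ, true_and] at hr
    simp only [mem_biUnion, mem_range, mem_powersetCard, Fintype.mem_piFinset]
    exact ⟨_, Nat.lt_succ_of_le hr, _, ⟨subset_univ _, rfl⟩,
      fun a => mem_image_of_mem r (mem_univ a)⟩
  refine (card_le_card hcover).trans (card_biUnion_le.trans (sum_le_sum fun s _ => ?_))
  refine card_biUnion_le.trans (le_of_eq ?_)
  rw [sum_congr rfl fun T hT => by
      rw [Fintype.card_piFinset, prod_const, (mem_powersetCard.1 hT).2],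
    sum_const, card_powersetCard, card_univ, card_univ, smul_eq_mul]

def NoSingletonFiber [DecidableEq β] (r : α → β) : Prop := ∀ b, #{a | r a = b} ≠ 1

theorem NoSingletonFiber.two_mul_card_image_le [DecidableEq β] {r : α → β}
    (hr : NoSingletonFiber r) :
    2 * #(univ.image r) ≤ Fintype.card α := by
  rw [← card_univ, card_eq_sum_card_image r univ, mul_comm, ← smul_eq_mul, ← sum_const]
  refine sum_le_sum fun b hb => ?_
  obtain ⟨a, -, rfl⟩ := mem_image.1 hb
  have : 0 < #{a' | r a' = r a} := card_pos.2 ⟨a, mem_filter.2 ⟨mem_univ a, rfl⟩⟩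
  have := hr (r a)
  omega

end Counting

section Estimates

theorem pow_eq_sq_rpow_div_two {x : ℝ} (hx : 0 ≤ x) (h : ℕ) : x ^ h = (x ^ 2) ^ ((h : ℝ) / 2) := by
  rw [← rpow_natCast x 2, ← rpow_mul hx, ← rpow_natCast]
  congr 1
  push_cast
  ring

theorem choose_le_exp_mul_div_pow (m : ℕ) {t : ℕ} (ht : 0 < t) :
    (m.choose t : ℝ) ≤ (exp 1 * m / t) ^ t := by
  have htR : (0 : ℝ) < t := by exact_mod_cast ht
  calc (m.choose t : ℝ) ≤ m ^ t / t.factorial := Nat.choose_le_pow_div t m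
    _ = ((m : ℝ) / t) ^ t * ((t : ℝ) ^ t / t.factorial) := by rw [div_pow]; field_simp
    _ ≤ ((m : ℝ) / t) ^ t * exp 1 ^ t := by
        rw [exp_one_pow]
        gcongr
        exact pow_div_factorial_le_exp _ htR.le t
    _ = (exp 1 * m / t) ^ t := by ring

theorem choose_mul_pow_le {m t h : ℕ} (ht : 2 * t ≤ h) :
    (m.choose t : ℝ) * t ^ h ≤ (exp 1 * m * t) ^ ((h : ℝ) / 2) := by
  rcases Nat.eq_zero_or_pos t with rfl | htpos
  · rcases Nat.eq_zero_or_pos h with rfl | hh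
    · simp
    · simp only [Nat.cast_zero, zero_pow hh.ne', mul_zero]
      positivity
  rcases lt_or_ge m t with hmt | htm
  · rw [Nat.choose_eq_zero_of_lt hmt, Nat.cast_zero, zero_mul]
    positivity
  have htR : (0 : ℝ) < t := by exact_mod_cast htpos
  set x := exp 1 * m / t
  have hx : 1 ≤ x := by
    rw [le_div_iff₀ htR, one_mul]
    have : (t : ℝ) ≤ m := by exact_mod_cast htm
    nlinarith [add_one_le_exp (1 : ℝ)]
  have hxt : (m.choose t : ℝ) ≤ x ^ ((h : ℝ) / 2) := by
    calc (m.choose t : ℝ) ≤ x ^ t := choose_le_exp_mul_div_pow m htpos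
      _ = x ^ (t : ℝ) := (rpow_natCast x t).symm
      _ ≤ x ^ ((h : ℝ) / 2) := by
          refine rpow_le_rpow_of_exponent_le hx ?_
          rw [le_div_iff₀ two_pos]
          exact_mod_cast (by omega : t * 2 ≤ h)
  calc (m.choose t : ℝ) * t ^ h ≤ x ^ ((h : ℝ) / 2) * ((t : ℝ) ^ 2) ^ ((h : ℝ) / 2) := by
        rw [← pow_eq_sq_rpow_div_two htR.le]
        gcongr
    _ = (exp 1 * m * t) ^ ((h : ℝ) / 2) := by
        rw [← mul_rpow (by positivity) (by positivity)]
        congr 1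
        simp only [x]
        field_simp

theorem sum_choose_mul_pow_le (m h : ℕ) :
    ∑ t ∈ range (h / 2 + 1), (m.choose t : ℝ) * t ^ h ≤ (exp 1 * m * h) ^ ((h : ℝ) / 2) := by
  have hhalf : ((h / 2 : ℕ) : ℝ) ≤ h / 2 := Nat.cast_div_le
  have hterm : ∀ t ∈ range (h / 2 + 1),
      (m.choose t : ℝ) * t ^ h ≤ (exp 1 * m * (h / 2)) ^ ((h : ℝ) / 2) := by
    intro t ht
    have ht : t ≤ h / 2 := Nat.lt_succ_iff.1 (mem_range.1 ht)
    refine (choose_mul_pow_le (by omega)).trans (rpow_le_rpow (by positivity) ?_ (by positivity))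
    gcongr
    exact (Nat.cast_le.2 ht).trans hhalf
  have hcount : ((h / 2 + 1 : ℕ) : ℝ) ≤ 2 ^ ((h : ℝ) / 2) :=
    calc ((h / 2 + 1 : ℕ) : ℝ) ≤ 2 ^ (h / 2) := by exact_mod_cast Nat.lt_two_pow_self
      _ = 2 ^ ((h / 2 : ℕ) : ℝ) := (rpow_natCast _ _).symm
      _ ≤ 2 ^ ((h : ℝ) / 2) := rpow_le_rpow_of_exponent_le one_le_two hhalf
  calc _ ≤ ∑ _t ∈ range (h / 2 + 1), (exp 1 * m * (h / 2)) ^ ((h : ℝ) / 2) := sum_le_sum hterm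
    _ = ((h / 2 + 1 : ℕ) : ℝ) * (exp 1 * m * (h / 2)) ^ ((h : ℝ) / 2) := by
        rw [sum_const, card_range, nsmul_eq_mul]
    _ ≤ 2 ^ ((h : ℝ) / 2) * (exp 1 * m * (h / 2)) ^ ((h : ℝ) / 2) := by gcongr
    _ = (exp 1 * m * h) ^ ((h : ℝ) / 2) := by
        rw [← mul_rpow zero_le_two (by positivity)]
        congr 1
        ring

theorem card_noSingletonFiber_le {α β : Type*} [Fintype α] [DecidableEq α] [Fintype β]
    [DecidableEq β] :
    (#{r : α → β | NoSingletonFiber r} : ℝ)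
      ≤ (exp 1 * Fintype.card β * Fintype.card α) ^ ((Fintype.card α : ℝ) / 2) := by
  have hsub : (univ.filter fun r : α → β => NoSingletonFiber r)
      ⊆ univ.filter fun r => #(univ.image r) ≤ Fintype.card α / 2 :=
    monotone_filter_right _ fun r _ hr => by
      have := hr.two_mul_card_image_le
      omega
  calc (#{r : α → β | NoSingletonFiber r} : ℝ)
      ≤ ((∑ s ∈ range (Fintype.card α / 2 + 1),
          (Fintype.card β).choose s * s ^ Fintype.card α : ℕ) : ℝ) := by
        exact_mod_cast (card_le_card hsub).trans (card_filter_card_image_le _)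
    _ ≤ _ := by
        push_cast
        exact sum_choose_mul_pow_le _ _

theorem exp_mul_mul_rpow_le {n m : ℕ} (hn : 0 < n) (hmn : 2 * m ≤ n) (h : ℕ) :
    (exp 1 * m * h) ^ ((h : ℝ) / 2) ≤ (6 * h / n) ^ ((h : ℝ) / 2) * ((n - m + 1 : ℕ) : ℝ) ^ h := by
  rw [pow_eq_sq_rpow_div_two (by positivity), ← mul_rpow (by positivity) (by positivity)]
  refine rpow_le_rpow (by positivity) ?_ (by positivity)
  have hmnR : 2 * (m : ℝ) ≤ n := by exact_mod_cast hmn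
  have hW : (n : ℝ) / 2 ≤ ((n - m + 1 : ℕ) : ℝ) := by
    push_cast [Nat.cast_sub (by omega : m ≤ n)]
    linarith
  have he : exp 1 ≤ 3 := exp_one_lt_d9.le.trans (by norm_num)
  rw [div_mul_eq_mul_div, le_div_iff₀ (by positivity)]
  calc exp 1 * m * h * n ≤ 3 * m * h * n := by gcongr
    _ ≤ 3 * (n / 2) * h * n := by gcongr; linarith
    _ = 6 * h * (n / 2) ^ 2 := by ring
    _ ≤ 6 * h * ((n - m + 1 : ℕ) : ℝ) ^ 2 := by gcongr

end Estimates

section Hypermatching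

variable {m k n : ℕ}

theorem card_filter_injective (α β : Type*) [Fintype α] [DecidableEq α] [Fintype β]
    [DecidableEq β] :
    #{c : α → β | Injective c} = (Fintype.card β).descFactorial (Fintype.card α) := by
  rw [← Fintype.card_subtype, Fintype.card_congr (Equiv.subtypeInjectiveEquivEmbedding α β),
    Fintype.card_embedding_eq]

theorem card_PHMset : #(PHMset m k n) = n.descFactorial m ^ k := by
  rw [PHMset, card_filter_forall_column fun (_ : Fin k) (c : Fin m → Fin n) => Injective c]
  simp [card_filter_injective]

theorem mem_edgeNK {M : Fin m → Fin k → Fin n} {j : Fin m} {x : Fin n × Fin k} :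
    x ∈ edgeNK M j ↔ M j x.2 = x.1 := by
  simp [edgeNK, Prod.ext_iff, eq_comm]

theorem eq_of_mem_edgeNK {M : Fin m → Fin k → Fin n} (hM : M ∈ PHMset m k n) {j j' : Fin m}
    {x : Fin n × Fin k} (h : x ∈ edgeNK M j) (h' : x ∈ edgeNK M j') : j = j' :=
  (mem_filter.1 hM).2 x.2 ((mem_edgeNK.1 h).trans (mem_edgeNK.1 h').symm)

def PHMsetPlacing (U : Finset (Fin n × Fin k)) (r : U → Fin m) :
    Finset (Fin m → Fin k → Fin n) :=
  {M ∈ PHMset m k n | ∀ u : U, u.1 ∈ edgeNK M (r u)}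

/-- The constraints fix `c` on the `r`-image of column `ℓ` of `U`, and `r` is injective on that
column as soon as some `c` satisfies them. -/
theorem card_column_mul_pow_le (hmn : m ≤ n) (U : Finset (Fin n × Fin k)) (r : U → Fin m)
    (ℓ : Fin k) :
    #{c : Fin m → Fin n | Injective c ∧ ∀ u : U, u.1.2 = ℓ → c (r u) = u.1.1}
      * (n - m + 1) ^ #{u : U | u.1.2 = ℓ} ≤ n.descFactorial m := by
  set S : Finset (Fin m → Fin n) := {c | Injective c ∧ ∀ u : U, u.1.2 = ℓ → c (r u) = u.1.1}
  set col : Finset U := {u | u.1.2 = ℓ}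
  rcases S.eq_empty_or_nonempty with hS | ⟨c₀, hc₀⟩
  · simp [hS]
  have hc₀val := (mem_filter.1 hc₀).2.2
  have hinjOn : Set.InjOn r col := by
    intro u hu u' hu' h
    have hu := (mem_filter.1 hu).2
    have hu' := (mem_filter.1 hu').2
    exact Subtype.ext (Prod.ext (by rw [← hc₀val u hu, ← hc₀val u' hu', h]) (hu.trans hu'.symm))
  have hcard : #(col.image r) = #col := card_image_of_injOn hinjOn
  have hagree : ∀ c ∈ S, ∀ c' ∈ S, ∀ j ∈ col.image r, c j = c' j := by
    intro c hc c' hc' j hj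
    obtain ⟨u, hu, rfl⟩ := mem_image.1 hj
    rw [(mem_filter.1 hc).2.2 u (mem_filter.1 hu).2, (mem_filter.1 hc').2.2 u (mem_filter.1 hu).2]
  have hS : #S ≤ n.descFactorial (m - #col) := by
    simpa [hcard] using card_le_descFactorial_of_injective_of_eqOn (col.image r) S
      (fun c hc => (mem_filter.1 hc).2.1) hagree
  calc #S * (n - m + 1) ^ #col ≤ n.descFactorial (m - #col) * (n - m + 1) ^ #col :=
        Nat.mul_le_mul_right _ hS
    _ ≤ n.descFactorial m := by
        refine Nat.descFactorial_sub_mul_pow_le ?_ hmn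
        exact hcard ▸ (card_le_univ _).trans_eq (Fintype.card_fin m)

theorem card_PHMsetPlacing_mul_pow_le (hmn : m ≤ n) (U : Finset (Fin n × Fin k))
    (r : U → Fin m) : #(PHMsetPlacing U r) * (n - m + 1) ^ #U ≤ #(PHMset m k n) := by
  have hcolumns : #(PHMsetPlacing U r) =
      ∏ ℓ, #{c : Fin m → Fin n | Injective c ∧ ∀ u : U, u.1.2 = ℓ → c (r u) = u.1.1} := by
    refine Eq.trans ?_ (card_filter_forall_column fun ℓ (c : Fin m → Fin n) =>
      Injective c ∧ ∀ u : U, u.1.2 = ℓ → c (r u) = u.1.1)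
    congr 1
    ext M
    simp only [PHMsetPlacing, PHMset, mem_filter, mem_univ, true_and, mem_edgeNK]
    constructor
    · rintro ⟨hinj, hM⟩ ℓ
      exact ⟨hinj ℓ, fun u hu => hu ▸ hM u⟩
    · intro hM
      exact ⟨fun ℓ => (hM ℓ).1, fun u => (hM u.1.2).2 u rfl⟩
  have hsum : #U = ∑ ℓ, #{u : U | u.1.2 = ℓ} := by
    rw [← Fintype.card_coe, ← card_univ]
    exact card_eq_sum_card_fiberwise fun _ _ => mem_univ _
  rw [hcolumns, hsum, ← prod_pow_eq_pow_sum, ← prod_mul_distrib, card_PHMset]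
  calc _ ≤ ∏ _ℓ : Fin k, n.descFactorial m :=
        prod_le_prod' fun ℓ _ => card_column_mul_pow_le hmn U r ℓ
    _ = n.descFactorial m ^ k := by simp

theorem filter_subset_biUnion_PHMsetPlacing (U : Finset (Fin n × Fin k)) :
    {M ∈ PHMset m k n | U ⊆ univ.biUnion (edgeNK M) ∧ ∀ j, #(U ∩ edgeNK M j) ≠ 1}
      ⊆ ({r : U → Fin m | NoSingletonFiber r} : Finset (U → Fin m)).biUnion (PHMsetPlacing U) := by
  intro M hM
  obtain ⟨hMP, hcover, hsf⟩ := mem_filter.1 hM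
  have hex : ∀ u : U, ∃ j, u.1 ∈ edgeNK M j := fun u => by simpa using hcover u.2
  choose r hr using hex
  have hplace : M ∈ PHMsetPlacing U r := mem_filter.2 ⟨hMP, hr⟩
  refine mem_biUnion.2 ⟨r, mem_filter.2 ⟨mem_univ _, fun j => ?_⟩, hplace⟩
  have hr_iff : ∀ u : U, r u = j ↔ u.1 ∈ edgeNK M j :=
    fun u => ⟨fun h => h ▸ hr u, eq_of_mem_edgeNK hMP (hr u)⟩
  convert hsf j using 1
  rw [← card_map (Embedding.subtype _)]
  congr 1
  ext x
  simp [hr_iff, and_comm]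

theorem card_cover_noSingleton_mul_pow_le (hmn : m ≤ n) (U : Finset (Fin n × Fin k)) :
    #{M ∈ PHMset m k n | U ⊆ univ.biUnion (edgeNK M) ∧ ∀ j, #(U ∩ edgeNK M j) ≠ 1}
        * (n - m + 1) ^ #U
      ≤ #{r : U → Fin m | NoSingletonFiber r} * #(PHMset m k n) :=
  calc _ ≤ (∑ r ∈ {r : U → Fin m | NoSingletonFiber r}, #(PHMsetPlacing U r)) * (n - m + 1) ^ #U :=
        Nat.mul_le_mul_right _ ((card_le_card (filter_subset_biUnion_PHMsetPlacing U)).trans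
          card_biUnion_le)
    _ ≤ ∑ _r ∈ {r : U → Fin m | NoSingletonFiber r}, #(PHMset m k n) := by
        rw [sum_mul]
        exact sum_le_sum fun r _ => card_PHMsetPlacing_mul_pow_le hmn U r
    _ = _ := by rw [sum_const, smul_eq_mul]

end Hypermatching

/-- For a fixed set `U` of `h` vertices with `2 ≤ h ≤ km`, the
probability that a random hypermatching covers `U` while no hyperedge meets `U` in
exactly one vertex is at most `(Ch/n)^{h/2}`. -/
theorem combinatorial_bound
    (k : ℕ) :
    ∃ C : ℝ, ∃ α₀ : ℝ, 0 < α₀ ∧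
      ∀ n m : ℕ, (m : ℝ) ≤ α₀ * n →
      ∀ U : Finset (Fin n × Fin k), 2 ≤ U.card → U.card ≤ k * m →
        ((((PHMset m k n).filter fun M =>
            U ⊆ univ.biUnion (edgeNK M) ∧
              ∀ j : Fin m, (U ∩ edgeNK M j).card ≠ 1).card : ℝ))
          ≤ (C * U.card / n) ^ ((U.card : ℝ) / 2) * ((PHMset m k n).card : ℝ) := by
  refine ⟨6, 1 / 2, by norm_num, fun n m hmn U hU _ => ?_⟩
  have h2mn : 2 * m ≤ n := by exact_mod_cast (by linarith : 2 * (m : ℝ) ≤ n)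
  have hn : 0 < n := by
    obtain ⟨x, -⟩ := card_pos.1 (by omega : 0 < #U)
    exact x.1.pos
  have hgood := card_noSingletonFiber_le (α := U) (β := Fin m)
  rw [Fintype.card_fin, Fintype.card_coe] at hgood
  have hW : (0 : ℝ) < ((n - m + 1 : ℕ) : ℝ) ^ #U := by positivity
  refine le_of_mul_le_mul_right ?_ hW
  calc _ ≤ (#{r : U → Fin m | NoSingletonFiber r} : ℝ) * #(PHMset m k n) := by
        exact_mod_cast card_cover_noSingleton_mul_pow_le (by omega) U
    _ ≤ (exp 1 * m * #U) ^ ((#U : ℝ) / 2) * #(PHMset m k n) := by gcongr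
    _ ≤ (6 * #U / n) ^ ((#U : ℝ) / 2) * ((n - m + 1 : ℕ) : ℝ) ^ #U * #(PHMset m k n) := by
        gcongr
        exact exp_mul_mul_rpow_le hn h2mn _
    _ = _ := by ring
end
end

section
/- Let q ≥ 2, let n,m,k,k' ∈ ℕ with k ≤ k', let D be a probability distribution on (ZMod q)^{n×k'}, let φ : [k] → [k'] be an injection, let Y be any probability distribution on (ZMod q)^k, let M ∈ PHM(m,k,n), and let B ⊆ (ZMod q)^{m×k} satisfy p := Pr_{X∼D, Y∼Y^{⊗m}}[Π^φ_M X − Y ∈ B] > 0. Then for every X₀ ∈ (ZMod q)^{n×k'}: μ_{Post(D;M,B)}(X₀) = μ_D(X₀) · (μ_{Y^{⊗m}} * μ_B)(Π^φ_M X₀) · ν, where ν := (|B|/q^{m·k}) / p, μ_B is the density of the uniform distribution on B, and (f*g)(z) := E_{x uniform}[f(x)·g(z−x)] denotes convolution on (ZMod q)^{m×k}. -/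
open Finset

noncomputable section

attribute [local instance] Classical.propDecidable

/-- The probability of the conditioning event `Π^φ_M X − Y ∈ B` for independent
`X ∼ D` and `Y ∼ Y^{⊗m}`. -/
def pSucc {q m k n k' : ℕ} [NeZero q] (D : (Fin n × Fin k' → ZMod q) → ℝ)
    (Y : (Fin k → ZMod q) → ℝ) (φ : Fin k → Fin k') (M : Fin m → Fin k → Fin n)
    (B : Finset (Fin m × Fin k → ZMod q)) : ℝ :=
  ∑ X : Fin n × Fin k' → ZMod q, ∑ Yv : Fin m × Fin k → ZMod q,
    (if projMap φ M X - Yv ∈ B then D X * prodRows Y Yv else 0)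

/-- The posterior distribution `Post(D; M, B)`: the conditional distribution of `X ∼ D`
given `Π^φ_M X − Y ∈ B`, for `Y ∼ Y^{⊗m}` independent of `X`. -/
def postDist {q m k n k' : ℕ} [NeZero q] (D : (Fin n × Fin k' → ZMod q) → ℝ)
    (Y : (Fin k → ZMod q) → ℝ) (φ : Fin k → Fin k') (M : Fin m → Fin k → Fin n)
    (B : Finset (Fin m × Fin k → ZMod q)) : (Fin n × Fin k' → ZMod q) → ℝ :=
  fun X₀ => D X₀ *
    (∑ Yv : Fin m × Fin k → ZMod q,
      (if projMap φ M X₀ - Yv ∈ B then prodRows Y Yv else 0)) / pSucc D Y φ M B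

/-- The uniform distribution on a subset `B`. -/
def unifOn {S : Type*} [Fintype S] (B : Finset S) : S → ℝ :=
  fun x => if x ∈ B then 1 / (B.card : ℝ) else 0

/-- Convolution on a finite abelian group: `(f*g)(z) = E_x[f(x)·g(z−x)]`. -/
def convol {S : Type*} [Fintype S] [AddGroup S] (f g : S → ℝ) : S → ℝ :=
  fun z => (∑ x, f x * g (z - x)) / (Fintype.card S : ℝ)

/-! The posterior mass of `X₀` is `D(X₀) · Pr[Π X₀ − Y ∈ B] / p` (Bayes), and
`Pr[z − Y ∈ B] = ∑_y Y^{⊗m}(y) · [z − y ∈ B]` is the convolution `(μ_{Y^{⊗m}} * μ_B)(z)`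
rescaled by `|B| / q^{mk}`, since `|B| · μ_B / |S|` is the indicator of `B`. -/

section Convolution

variable {S : Type*} [Fintype S]

theorem card_mul_unifOn [DecidableEq S] (B : Finset S) (x : S) :
    (B.card : ℝ) * unifOn B x = if x ∈ B then 1 else 0 := by
  by_cases hx : x ∈ B
  · have hB : (B.card : ℝ) ≠ 0 := Nat.cast_ne_zero.mpr (card_ne_zero_of_mem hx)
    simp [unifOn, hx, hB]
  · simp [unifOn, hx]

theorem convol_densityFn [AddGroup S] (f g : S → ℝ) (z : S) :
    convol (densityFn f) (densityFn g) z = Fintype.card S * ∑ x, f x * g (z - x) := by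
  have : Nonempty S := ⟨z⟩
  simp only [convol, densityFn]
  rw [div_eq_iff (Nat.cast_ne_zero.mpr Fintype.card_ne_zero), mul_sum, sum_mul]
  exact sum_congr rfl fun x _ => by ring

theorem convol_densityFn_unifOn_mul [AddGroup S] [DecidableEq S] (f : S → ℝ) (B : Finset S)
    (z : S) :
    convol (densityFn f) (densityFn (unifOn B)) z * ((B.card : ℝ) / Fintype.card S)
      = ∑ x, if z - x ∈ B then f x else 0 := by
  have : Nonempty S := ⟨z⟩
  have hS : (Fintype.card S : ℝ) ≠ 0 := Nat.cast_ne_zero.mpr Fintype.card_ne_zero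
  rw [convol_densityFn, mul_sum, sum_mul]
  refine sum_congr rfl fun x _ => ?_
  calc _ = f x * ((B.card : ℝ) * unifOn B (z - x)) := by field_simp
    _ = _ := by rw [card_mul_unifOn]; split_ifs <;> simp

end Convolution

theorem card_matrix_zmod (q m k : ℕ) [NeZero q] :
    (Fintype.card (Fin m × Fin k → ZMod q) : ℝ) = (q : ℝ) ^ (m * k) := by
  simp [ZMod.card]

theorem posterior_density_formula_general
    (q : ℕ) [NeZero q] (n m k k' : ℕ)
    (D : (Fin n × Fin k' → ZMod q) → ℝ)
    (φ : Fin k → Fin k')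
    (Y : (Fin k → ZMod q) → ℝ)
    (M : Fin m → Fin k → Fin n)
    (B : Finset (Fin m × Fin k → ZMod q)) :
    ∀ X₀ : Fin n × Fin k' → ZMod q,
      densityFn (postDist D Y φ M B) X₀
        = densityFn D X₀ *
            convol (densityFn (prodRows Y)) (densityFn (unifOn B)) (projMap φ M X₀) *
            (((B.card : ℝ) / (q : ℝ) ^ (m * k)) / pSucc D Y φ M B) := by
  intro X₀
  have likelihood := convol_densityFn_unifOn_mul (prodRows Y) B (projMap φ M X₀)
  rw [card_matrix_zmod] at likelihood
  rw [mul_assoc, ← mul_div_assoc, likelihood]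
  simp only [densityFn, postDist]
  rw [mul_div_assoc, mul_assoc]

/-- The density of the posterior distribution factors as
`μ_D(X₀)·(μ_{Y^{⊗m}} * μ_B)(Π^φ_M X₀)·ν`. -/
theorem posterior_density_formula
    (q : ℕ) [NeZero q] (hq : 2 ≤ q) (n m k k' : ℕ) (hkk' : k ≤ k')
    (D : (Fin n × Fin k' → ZMod q) → ℝ) (hD : IsDist D)
    (φ : Fin k → Fin k') (hφ : Function.Injective φ)
    (Y : (Fin k → ZMod q) → ℝ) (hY : IsDist Y)
    (M : Fin m → Fin k → Fin n) (hM : M ∈ PHMset m k n)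
    (B : Finset (Fin m × Fin k → ZMod q))
    (hp : 0 < pSucc D Y φ M B) :
    ∀ X₀ : Fin n × Fin k' → ZMod q,
      densityFn (postDist D Y φ M B) X₀
        = densityFn D X₀ *
            convol (densityFn (prodRows Y)) (densityFn (unifOn B)) (projMap φ M X₀) *
            (((B.card : ℝ) / (q : ℝ) ^ (m * k)) / pSucc D Y φ M B) :=
  posterior_density_formula_general q n m k k' D φ Y M B

end
end

section
/- Let q ≥ 2, let N ∈ ℕ, let h ∈ {1,…,N}, and let g : (ZMod q)^N → ℂ satisfy ‖g‖₁ = 1 and ‖g‖_∞ ≤ q^h. Then Σ_{u ∈ (ZMod q)^N : wt(u) = h} |ĝ(u)| ≤ (q²·e·N/h)^{h/2}. -/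
open Finset

noncomputable section

attribute [local instance] Classical.propDecidable

lemma omegaQ_isPrimitiveRoot (q : ℕ) [NeZero q] : IsPrimitiveRoot (omegaQ q) q :=
  Complex.isPrimitiveRoot_exp q (NeZero.ne q)

/-- The character `a ↦ ω ^ a` of `ZMod q`. -/
def omegaChar (q : ℕ) [NeZero q] : AddChar (ZMod q) ℂ :=
  AddChar.zmodChar q (omegaQ_isPrimitiveRoot q).pow_eq_one

section Fourier

variable {q : ℕ} [NeZero q] {I : Type*} [Fintype I] [DecidableEq I]

lemma omegaChar_isPrimitive : (omegaChar q).IsPrimitive :=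
  AddChar.zmodChar_primitive_of_primitive_root q (omegaQ_isPrimitiveRoot q)

lemma fcoef_eq_sum_omegaChar (g : (I → ZMod q) → ℂ) (u : I → ZMod q) :
    fcoef g u = (∑ x, g x * omegaChar q (-(u ⬝ᵥ x))) / Fintype.card (I → ZMod q) := by
  simp only [fcoef, zpow_neg, zpow_natCast, AddChar.map_neg_eq_inv, dotProduct]
  rfl

lemma sum_omegaChar_dotProduct (z : I → ZMod q) :
    ∑ u : I → ZMod q, omegaChar q (u ⬝ᵥ z)
      = if z = 0 then (Fintype.card (I → ZMod q) : ℂ) else 0 := by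
  have hprod : ∑ u : I → ZMod q, omegaChar q (u ⬝ᵥ z) = ∏ i, ∑ a, omegaChar q (a * z i) := by
    simp only [dotProduct, AddChar.map_sum_eq_prod, Fintype.prod_sum]
  rw [hprod]
  split_ifs with hz
  · simp [hz]
  · obtain ⟨i, hi⟩ : ∃ i, z i ≠ 0 := Function.ne_iff.mp hz
    exact prod_eq_zero (mem_univ i) (by simp [AddChar.sum_mulShift _ omegaChar_isPrimitive, hi])

lemma sum_fcoef_mul_conj (g : (I → ZMod q) → ℂ) :
    ∑ u, fcoef g u * starRingEnd ℂ (fcoef g u)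
      = (∑ x, g x * starRingEnd ℂ (g x)) / Fintype.card (I → ZMod q) := by
  set Q : ℂ := (Fintype.card (I → ZMod q) : ℂ)
  have hQ : Q ≠ 0 := Nat.cast_ne_zero.mpr Fintype.card_ne_zero
  calc ∑ u, fcoef g u * starRingEnd ℂ (fcoef g u)
      = (∑ x, ∑ y, g x * starRingEnd ℂ (g y) * ∑ u : I → ZMod q, omegaChar q (u ⬝ᵥ (y - x)))
          / Q ^ 2 := by
        simp_rw [fcoef_eq_sum_omegaChar, map_div₀, map_sum, map_mul, map_natCast,
          ← AddChar.map_neg_eq_conj, neg_neg, div_mul_div_comm, ← sq, ← sum_div, sum_mul_sum,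
          mul_sum, dotProduct_sub, sub_eq_neg_add, AddChar.map_add_eq_mul]
        rw [sum_comm]
        refine congrArg (· / Q ^ 2) (sum_congr rfl fun x _ => ?_)
        rw [sum_comm]
        exact sum_congr rfl fun y _ => sum_congr rfl fun u _ => by ring
    _ = (∑ x, g x * starRingEnd ℂ (g x)) / Q := by
        simp only [sum_omegaChar_dotProduct, sub_eq_zero, mul_ite, mul_zero, sum_ite_eq',
          mem_univ, if_true, ← sum_mul]
        rw [sq]
        exact mul_div_mul_right _ _ hQ

theorem sum_norm_fcoef_sq (g : (I → ZMod q) → ℂ) : ∑ u, ‖fcoef g u‖ ^ 2 = norm2sq g := by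
  have h := sum_fcoef_mul_conj g
  simp only [Complex.mul_conj, Complex.normSq_eq_norm_sq] at h
  exact_mod_cast h

end Fourier

lemma norm_le_normInf {S : Type*} [Fintype S] (g : S → ℂ) (x : S) : ‖g x‖ ≤ normInf g :=
  le_ciSup (f := fun x => ‖g x‖) (Set.finite_range _).bddAbove x

lemma norm2sq_le_normInf_mul_norm1 {S : Type*} [Fintype S] (g : S → ℂ) :
    norm2sq g ≤ normInf g * norm1 g := by
  rw [norm2sq, norm1, ← mul_div_assoc, mul_sum]
  gcongr with x
  rw [sq]
  exact mul_le_mul_of_nonneg_right (norm_le_normInf g x) (norm_nonneg _)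

section Weight

variable {q : ℕ} [NeZero q] {I : Type*} [Fintype I] [DecidableEq I]

lemma card_filter_support_eq (S : Finset I) :
    #{u : I → ZMod q | ({i | u i ≠ 0} : Finset I) = S} = (q - 1) ^ #S := by
  have hfiber : ({u : I → ZMod q | ({i | u i ≠ 0} : Finset I) = S} : Finset _)
      = Fintype.piFinset fun i => if i ∈ S then {0}ᶜ else {0} := by
    ext u
    simp only [mem_filter, mem_univ, true_and, Finset.ext_iff, Fintype.mem_piFinset]
    refine forall_congr' fun i => ?_
    split_ifs with hi <;> simp [hi]
  simp only [hfiber, Fintype.card_piFinset, apply_ite card, card_singleton, Fintype.prod_ite_mem,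
    card_compl, ZMod.card, prod_const]

lemma card_filter_wt_eq (h : ℕ) :
    #{u : I → ZMod q | wt u = h} = (Fintype.card I).choose h * (q - 1) ^ h := by
  have hmaps : ∀ u ∈ ({u : I → ZMod q | wt u = h} : Finset _),
      ({i | u i ≠ 0} : Finset I) ∈ powersetCard h univ := by
    simp [wt]
  rw [card_eq_sum_card_fiberwise hmaps, ← card_univ, ← card_powersetCard, ← smul_eq_mul,
    ← sum_const]
  refine sum_congr rfl fun S hS => ?_
  rw [mem_powersetCard_univ] at hS
  rw [filter_filter, ← hS, ← card_filter_support_eq S]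
  congr 1
  refine filter_congr fun u _ => and_iff_right_of_imp fun hu => ?_
  rw [wt, hu]

end Weight

lemma choose_le_exp_one_mul_div_pow (n k : ℕ) : (n.choose k : ℝ) ≤ (Real.exp 1 * n / k) ^ k := by
  rcases k.eq_zero_or_pos with rfl | hk
  · simp
  have hfact : (k : ℝ) ^ k / k.factorial ≤ Real.exp 1 ^ k := by
    simpa [← Real.exp_nat_mul] using Real.pow_div_factorial_le_exp _ (Nat.cast_nonneg k) k
  calc (n.choose k : ℝ) ≤ n ^ k / k.factorial := Nat.choose_le_pow_div k n
    _ = n ^ k * ((k : ℝ) ^ k / k.factorial) / (k : ℝ) ^ k := by field_simp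
    _ ≤ n ^ k * Real.exp 1 ^ k / (k : ℝ) ^ k := by gcongr
    _ = (Real.exp 1 * n / k) ^ k := by ring

lemma le_rpow_div_two_of_sq_le {a x : ℝ} {n : ℕ} (hx : 0 ≤ x) (h : a ^ 2 ≤ x ^ n) :
    a ≤ x ^ ((n : ℝ) / 2) := by
  rw [div_eq_mul_one_div, Real.rpow_mul hx, Real.rpow_natCast, ← Real.sqrt_eq_rpow]
  exact Real.le_sqrt_of_sq_le h

theorem trivial_level_inequality_general
    (q : ℕ) [NeZero q] (N : ℕ) (h : ℕ)
    (g : (Fin N → ZMod q) → ℂ) (hg1 : norm1 g = 1)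
    (hgi : normInf g ≤ (q : ℝ) ^ h) :
    ∑ u ∈ univ.filter (fun u : Fin N → ZMod q => wt u = h), ‖fcoef g u‖
      ≤ ((q : ℝ) ^ 2 * Real.exp 1 * N / h) ^ ((h : ℝ) / 2) := by
  set s := univ.filter fun u : Fin N → ZMod q => wt u = h
  have hcard : (#s : ℝ) ≤ (Real.exp 1 * N / h) ^ h * (q : ℝ) ^ h := by
    rw [card_filter_wt_eq, Fintype.card_fin, Nat.cast_mul, Nat.cast_pow]
    gcongr
    · exact choose_le_exp_one_mul_div_pow N h
    · exact_mod_cast Nat.sub_le q 1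
  have hmass : ∑ u ∈ s, ‖fcoef g u‖ ^ 2 ≤ (q : ℝ) ^ h :=
    calc ∑ u ∈ s, ‖fcoef g u‖ ^ 2 ≤ ∑ u, ‖fcoef g u‖ ^ 2 :=
          sum_le_univ_sum_of_nonneg fun _ => by positivity
      _ = norm2sq g := sum_norm_fcoef_sq g
      _ ≤ normInf g := by simpa [hg1] using norm2sq_le_normInf_mul_norm1 g
      _ ≤ (q : ℝ) ^ h := hgi
  refine le_rpow_div_two_of_sq_le (by positivity) ?_
  calc (∑ u ∈ s, ‖fcoef g u‖) ^ 2 ≤ #s * ∑ u ∈ s, ‖fcoef g u‖ ^ 2 := sq_sum_le_card_mul_sum_sq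
    _ ≤ (Real.exp 1 * N / h) ^ h * (q : ℝ) ^ h * (q : ℝ) ^ h := by gcongr
    _ = ((q : ℝ) ^ 2 * Real.exp 1 * N / h) ^ h := by ring

/-- Trivial level-`h` inequality: if `‖g‖₁ = 1` and `‖g‖_∞ ≤ q^h`,
then the level-`h` Fourier 1-mass is at most `(q²·e·N/h)^{h/2}`. -/
theorem trivial_level_inequality
    (q : ℕ) [NeZero q] (hq : 2 ≤ q) (N : ℕ) (h : ℕ) (hh1 : 1 ≤ h) (hhN : h ≤ N)
    (g : (Fin N → ZMod q) → ℂ) (hg1 : norm1 g = 1)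
    (hgi : normInf g ≤ (q : ℝ) ^ h) :
    ∑ u ∈ univ.filter (fun u : Fin N → ZMod q => wt u = h), ‖fcoef g u‖
      ≤ ((q : ℝ) ^ 2 * Real.exp 1 * N / h) ^ ((h : ℝ) / 2) :=
  trivial_level_inequality_general q N h g hg1 hgi

end
end
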